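/- arXiv:2403.16783 — 4 statements merged into one kernel-verified Lean document; each statement's English description precedes it below -/
import Mathlib

section
/- Let c ∈ [0, π/2) and let η : [-1,1] → ℝ be continuous and odd (η(-t) = -η(t)). If φ : [-1,1] → ℝ is twice continuously differentiable, satisfies φ''(t) + c²·φ(t) + η(t) = 0 on [-1,1], and φ(-1) = φ(1) = 0, then φ is odd; in particular φ(0) = 0. -/
/-!
The function `g t = φ t + φ (-t)` solves the homogeneous equation `g'' + c² g = 0` (the odd
forcing `η` cancels) and vanishes at `±1`. Since `c < π/2`, the solution `w t = cos (c t)` is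
positive on `[-1, 1]`, and this rules out a nonzero `g` with two zeros: the Wronskian
`g' w - g w'` is constant and is, up to the factor `w²`, the derivative of `g / w`; Rolle applied
to `g / w` makes it vanish, so `g / w` is constant, hence zero.
-/

open Real Set

theorem eq_of_hasDerivAt_zero_on_Icc {f : ℝ → ℝ} {a b : ℝ}
    (hf : ∀ t ∈ Icc a b, HasDerivAt f 0 t) : ∀ t ∈ Icc a b, f t = f a :=
  constant_of_has_deriv_right_zero (fun t ht => (hf t ht).continuousAt.continuousWithinAt)
    fun t ht => (hf t (Ico_subset_Icc_self ht)).hasDerivWithinAt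

theorem hasDerivAt_wronskian_eq_zero {k t : ℝ} {g g' w w' : ℝ → ℝ}
    (hg : HasDerivAt g (g' t) t) (hg' : HasDerivAt g' (-k * g t) t)
    (hw : HasDerivAt w (w' t) t) (hw' : HasDerivAt w' (-k * w t) t) :
    HasDerivAt (fun s => g' s * w s - g s * w' s) 0 t :=
  ((hg'.mul hw).sub (hg.mul hw')).congr_deriv (by ring)

theorem eq_zero_of_pos_solution {a b k : ℝ} {g g' w w' : ℝ → ℝ}
    (hg : ∀ t ∈ Icc a b, HasDerivAt g (g' t) t)
    (hg' : ∀ t ∈ Icc a b, HasDerivAt g' (-k * g t) t)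
    (hw : ∀ t ∈ Icc a b, HasDerivAt w (w' t) t)
    (hw' : ∀ t ∈ Icc a b, HasDerivAt w' (-k * w t) t)
    (hpos : ∀ t ∈ Icc a b, 0 < w t) (ha : g a = 0) (hb : g b = 0) :
    ∀ t ∈ Icc a b, g t = 0 := by
  rcases le_or_gt b a with hba | hab
  · intro t ht
    rwa [le_antisymm (ht.2.trans hba) ht.1]
  set r := fun s => g' s * w s - g s * w' s
  have hr : ∀ t ∈ Icc a b, r t = r a := eq_of_hasDerivAt_zero_on_Icc fun t ht =>
    hasDerivAt_wronskian_eq_zero (hg t ht) (hg' t ht) (hw t ht) (hw' t ht)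
  have hq : ∀ t ∈ Icc a b, HasDerivAt (fun s => g s / w s) (r t / w t ^ 2) t :=
    fun t ht => (hg t ht).div (hw t ht) (hpos t ht).ne'
  obtain ⟨s, hs, hrs⟩ := exists_hasDerivAt_eq_zero hab
    (fun t ht => (hq t ht).continuousAt.continuousWithinAt) (by simp [ha, hb])
    fun t ht => hq t (Ioo_subset_Icc_self ht)
  have hs' : s ∈ Icc a b := Ioo_subset_Icc_self hs
  have hr0 : ∀ t ∈ Icc a b, r t = 0 := fun t ht => by
    rw [hr t ht, ← hr s hs']
    exact (div_eq_zero_iff.mp hrs).resolve_right (pow_pos (hpos s hs') 2).ne'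
  have hconst : ∀ t ∈ Icc a b, g t / w t = g a / w a :=
    eq_of_hasDerivAt_zero_on_Icc fun t ht => by simpa [hr0 t ht] using hq t ht
  intro t ht
  have h := hconst t ht
  rw [ha, zero_div, div_eq_zero_iff] at h
  exact h.resolve_right (hpos t ht).ne'

theorem hasDerivAt_cos_mul (c t : ℝ) :
    HasDerivAt (fun s => cos (c * s)) (-(c * sin (c * t))) t :=
  ((hasDerivAt_id t).const_mul c).cos.congr_deriv (by simp only [id_eq, mul_one]; ring)

theorem hasDerivAt_neg_mul_sin_mul (c t : ℝ) :
    HasDerivAt (fun s => -(c * sin (c * s))) (-c ^ 2 * cos (c * t)) t :=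
  (((hasDerivAt_id t).const_mul c).sin.const_mul c).neg.congr_deriv (by simp only [id_eq, mul_one]; ring)

theorem cos_mul_pos {c t : ℝ} (hc : c ∈ Ico 0 (π / 2)) (ht : t ∈ Icc (-1) 1) :
    0 < cos (c * t) := by
  obtain ⟨hc0, hc⟩ := hc
  apply cos_pos_of_mem_Ioo
  constructor <;> nlinarith [ht.1, ht.2]

theorem neg_mem_Icc_neg {a t : ℝ} (ht : t ∈ Icc (-a) a) : -t ∈ Icc (-a) a :=
  ⟨by linarith [ht.2], by linarith [ht.1]⟩

theorem hasDerivAt_add_comp_neg {a t : ℝ} {f f' : ℝ → ℝ} (ht : t ∈ Icc (-a) a)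
    (hf : ∀ s ∈ Icc (-a) a, HasDerivAt f (f' s) s) :
    HasDerivAt (fun s => f s + f (-s)) (f' t - f' (-t)) t :=
  ((hf t ht).add ((hf (-t) (neg_mem_Icc_neg ht)).comp t (hasDerivAt_neg t))).congr_deriv (by ring)

theorem hasDerivAt_sub_comp_neg {a t : ℝ} {f f' : ℝ → ℝ} (ht : t ∈ Icc (-a) a)
    (hf : ∀ s ∈ Icc (-a) a, HasDerivAt f (f' s) s) :
    HasDerivAt (fun s => f s - f (-s)) (f' t + f' (-t)) t :=
  ((hf t ht).sub ((hf (-t) (neg_mem_Icc_neg ht)).comp t (hasDerivAt_neg t))).congr_deriv (by ring)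

theorem stmt_1_general (c : ℝ) (hc : c ∈ Set.Ico 0 (π / 2))
    (η : ℝ → ℝ)
    (hηodd : ∀ t ∈ Set.Icc (-1 : ℝ) 1, η (-t) = -η t)
    (φ φ' φ'' : ℝ → ℝ)
    (hd1 : ∀ t ∈ Set.Icc (-1 : ℝ) 1, HasDerivAt φ (φ' t) t)
    (hd2 : ∀ t ∈ Set.Icc (-1 : ℝ) 1, HasDerivAt φ' (φ'' t) t)
    (hode : ∀ t ∈ Set.Icc (-1 : ℝ) 1, φ'' t + c ^ 2 * φ t + η t = 0)
    (hbd1 : φ (-1) = 0) (hbd2 : φ 1 = 0) :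
    (∀ t ∈ Set.Icc (-1 : ℝ) 1, φ (-t) = -φ t) ∧ φ 0 = 0 := by
  have hg'' : ∀ t ∈ Icc (-1 : ℝ) 1,
      HasDerivAt (fun s => φ' s - φ' (-s)) (-c ^ 2 * (φ t + φ (-t))) t := fun t ht =>
    (hasDerivAt_sub_comp_neg ht hd2).congr_deriv
      (by linarith [hode t ht, hode (-t) (neg_mem_Icc_neg ht), hηodd t ht])
  have hg : ∀ t ∈ Icc (-1 : ℝ) 1, φ t + φ (-t) = 0 :=
    eq_zero_of_pos_solution (fun t ht => hasDerivAt_add_comp_neg ht hd1) hg''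
      (fun t _ => hasDerivAt_cos_mul c t) (fun t _ => hasDerivAt_neg_mul_sin_mul c t)
      (fun t ht => cos_mul_pos hc ht) (by simp [hbd1, hbd2]) (by simp [hbd1, hbd2])
  refine ⟨fun t ht => by linarith [hg t ht], ?_⟩
  have h0 := hg 0 (by norm_num)
  rw [neg_zero] at h0
  linarith

/-- Symmetry principle: if `φ'' + c²φ + η = 0` on `[-1,1]` with `η` odd and `φ(±1)=0`,
and `c < π/2`, then `φ` is odd; in particular `φ(0)=0`. -/
theorem stmt_1 (c : ℝ) (hc : c ∈ Set.Ico 0 (π / 2))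
    (η : ℝ → ℝ) (hηcont : ContinuousOn η (Set.Icc (-1 : ℝ) 1))
    (hηodd : ∀ t ∈ Set.Icc (-1 : ℝ) 1, η (-t) = -η t)
    (φ φ' φ'' : ℝ → ℝ)
    (hd1 : ∀ t ∈ Set.Icc (-1 : ℝ) 1, HasDerivAt φ (φ' t) t)
    (hd2 : ∀ t ∈ Set.Icc (-1 : ℝ) 1, HasDerivAt φ' (φ'' t) t)
    (hcont : ContinuousOn φ'' (Set.Icc (-1 : ℝ) 1))
    (hode : ∀ t ∈ Set.Icc (-1 : ℝ) 1, φ'' t + c ^ 2 * φ t + η t = 0)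
    (hbd1 : φ (-1) = 0) (hbd2 : φ 1 = 0) :
    (∀ t ∈ Set.Icc (-1 : ℝ) 1, φ (-t) = -φ t) ∧ φ 0 = 0 :=
  stmt_1_general c hc η hηodd φ φ' φ'' hd1 hd2 hode hbd1 hbd2
end

section
/- Let M be a symmetric n×n real matrix with M ≤ 0 (negative semidefinite) and let V be a symmetric matrix with 0 ≤ V ≤ I. Then for every monotone isotropic function f on symmetric matrices (i.e. f(A) ≤ f(B) whenever the ordered eigenvalues of A are pointwise at most those of B, and f is invariant under orthogonal conjugation), f(-V·M·V) ≤ f(-M). -/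
/-!
Write `S = -M ≥ 0`, so that `-(V M V) = Vᴴ S V`. Since `0 ≤ V ≤ 1` gives `V² ≤ V ≤ 1`, the map
`x ↦ V x` is a contraction. If `λ_k` is the `k`-th smallest eigenvalue of `Vᴴ S V` and `μ_k` that
of `S`, the span `U` of the eigenvectors of `Vᴴ S V` with eigenvalue `≥ λ_k` has dimension `≥ n - k`
and the span `W` of the eigenvectors of `S` with eigenvalue `≤ μ_k` has dimension `≥ k + 1`, so some
`x ≠ 0` lies in `U` with `V x ∈ W`. Then
`λ_k ‖x‖² ≤ ⟪x, Vᴴ S V x⟫ = ⟪V x, S V x⟫ ≤ μ_k ‖V x‖² ≤ μ_k ‖x‖²`, using `μ_k ≥ 0`.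
Hence `λ_k ≤ μ_k` for every `k`, and monotonicity of `f` concludes.
-/

open Matrix Module Finset
open scoped RealInnerProductSpace

theorem mul_self_le_self_of_nonneg_of_le_one {R : Type*} [Ring R] [PartialOrder R] [StarRing R]
    [StarOrderedRing R] {a : R} (h₀ : 0 ≤ a) (h₁ : a ≤ 1) : a * a ≤ a := by
  have h₁' : 0 ≤ 1 - a := sub_nonneg.2 h₁
  have key : a - a * a = (1 - a) * a * (1 - a) + a * (1 - a) * a := by noncomm_ring
  rw [← sub_nonneg, key]
  exact add_nonneg (conjugate_nonneg_of_nonneg h₀ h₁') (conjugate_nonneg_of_nonneg h₁' h₀)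

theorem Submodule.exists_mem_ne_zero_map_mem {K V V₂ : Type*} [DivisionRing K] [AddCommGroup V]
    [Module K V] [AddCommGroup V₂] [Module K V₂] [FiniteDimensional K V₂]
    (L : V →ₗ[K] V₂) {U : Submodule K V} {W : Submodule K V₂} [FiniteDimensional K U]
    (h : finrank K V₂ < finrank K U + finrank K W) : ∃ x ∈ U, x ≠ 0 ∧ L x ∈ W := by
  have hdim : finrank K (V₂ ⧸ W) < finrank K U := by
    have := W.finrank_quotient_add_finrank
    omega
  obtain ⟨⟨x, hxU⟩, hx, hx0⟩ := Submodule.exists_mem_ne_zero_of_ne_bot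
    (LinearMap.ker_ne_bot_of_finrank_lt (f := W.mkQ ∘ₗ L ∘ₗ U.subtype) hdim)
  refine ⟨x, hxU, fun h => hx0 (by simp [h]), ?_⟩
  simpa using hx

theorem Monotone.card_Ici_le_card_filter_le {α : Type*} [Preorder α] [DecidableLE α] {n : ℕ}
    {f : Fin n → α} {σ : Equiv.Perm (Fin n)} (hσ : Monotone (f ∘ σ)) (k : Fin n) :
    #(Ici k) ≤ #{i | f (σ k) ≤ f i} :=
  card_le_card_of_injOn σ (fun j hj => by simpa using hσ (mem_Ici.1 hj)) σ.injective.injOn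

theorem Monotone.card_Iic_le_card_filter_le {α : Type*} [Preorder α] [DecidableLE α] {n : ℕ}
    {f : Fin n → α} {σ : Equiv.Perm (Fin n)} (hσ : Monotone (f ∘ σ)) (k : Fin n) :
    #(Iic k) ≤ #{i | f i ≤ f (σ k)} :=
  card_le_card_of_injOn σ (fun j hj => by simpa using hσ (mem_Iic.1 hj)) σ.injective.injOn

section RayleighQuotient

variable {ι E : Type*} [Fintype ι] [NormedAddCommGroup E] [InnerProductSpace ℝ E]

namespace OrthonormalBasis

variable (b : OrthonormalBasis ι ℝ E)

theorem inner_eq_zero_of_mem_span_image {s : Set ι} {i : ι} (hi : i ∉ s) {x : E}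
    (hx : x ∈ Submodule.span ℝ (b '' s)) : ⟪b i, x⟫ = 0 := by
  have hle : Submodule.span ℝ (b '' s) ≤ LinearMap.ker (innerₛₗ ℝ (b i)) := by
    rw [Submodule.span_le]
    rintro _ ⟨j, hj, rfl⟩
    exact b.orthonormal.2 (ne_of_mem_of_not_mem hj hi).symm
  simpa using hle hx

theorem finrank_span_image (s : Finset ι) :
    finrank ℝ (Submodule.span ℝ (b '' s)) = #s := by
  rw [Set.image_eq_range, finrank_span_eq_card]
  · simp
  · exact b.orthonormal.linearIndependent.comp _ Subtype.val_injective

variable {b} {T : E →ₗ[ℝ] E} {μ : ι → ℝ}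

theorem inner_map_self_eq_sum (hT : ∀ i, T (b i) = μ i • b i) (x : E) :
    ⟪x, T x⟫ = ∑ i, μ i * ⟪b i, x⟫ ^ 2 := by
  conv_lhs => rw [← b.sum_repr' x, map_sum, inner_sum]
  refine sum_congr rfl fun i _ => ?_
  rw [map_smul, hT, real_inner_smul_right, real_inner_smul_right, b.sum_repr' x,
    real_inner_comm x]
  ring

theorem mul_norm_sq_le_inner_map_self (hT : ∀ i, T (b i) = μ i • b i) {s : Set ι} {c : ℝ}
    (hc : ∀ i ∈ s, c ≤ μ i) {x : E} (hx : x ∈ Submodule.span ℝ (b '' s)) :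
    c * ‖x‖ ^ 2 ≤ ⟪x, T x⟫ := by
  rw [← b.sum_sq_inner_right, inner_map_self_eq_sum hT, mul_sum]
  refine sum_le_sum fun i _ => ?_
  by_cases hi : i ∈ s
  · exact mul_le_mul_of_nonneg_right (hc i hi) (sq_nonneg _)
  · simp [b.inner_eq_zero_of_mem_span_image hi hx]

theorem inner_map_self_le_mul_norm_sq (hT : ∀ i, T (b i) = μ i • b i) {s : Set ι} {d : ℝ}
    (hd : ∀ i ∈ s, μ i ≤ d) {x : E} (hx : x ∈ Submodule.span ℝ (b '' s)) :
    ⟪x, T x⟫ ≤ d * ‖x‖ ^ 2 := by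
  rw [← b.sum_sq_inner_right, inner_map_self_eq_sum hT, mul_sum]
  refine sum_le_sum fun i _ => ?_
  by_cases hi : i ∈ s
  · exact mul_le_mul_of_nonneg_right (hd i hi) (sq_nonneg _)
  · simp [b.inner_eq_zero_of_mem_span_image hi hx]

end OrthonormalBasis

theorem le_of_card_lt_card_add_card (bT bS : OrthonormalBasis ι ℝ E) {T S L : E →ₗ[ℝ] E}
    {a s : ι → ℝ} (hT : ∀ i, T (bT i) = a i • bT i) (hS : ∀ i, S (bS i) = s i • bS i)
    (hTS : ∀ x, ⟪x, T x⟫ ≤ ⟪L x, S (L x)⟫) (hL : ∀ x, ‖L x‖ ≤ ‖x‖) {c d : ℝ} (hd : 0 ≤ d)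
    (hcard : Fintype.card ι < #{i | c ≤ a i} + #{i | s i ≤ d}) : c ≤ d := by
  have : FiniteDimensional ℝ E := .of_basis bT.toBasis
  obtain ⟨x, hxU, hx0, hxW⟩ := Submodule.exists_mem_ne_zero_map_mem L
    (U := Submodule.span ℝ (bT '' ({i | c ≤ a i} : Finset ι)))
    (W := Submodule.span ℝ (bS '' ({i | s i ≤ d} : Finset ι)))
    (by rwa [bT.finrank_span_image, bS.finrank_span_image, finrank_eq_card_basis bT.toBasis])
  have hx : 0 < ‖x‖ ^ 2 := by positivity
  refine le_of_mul_le_mul_right ?_ hx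
  calc c * ‖x‖ ^ 2 ≤ ⟪x, T x⟫ :=
        OrthonormalBasis.mul_norm_sq_le_inner_map_self hT (by simp) hxU
    _ ≤ ⟪L x, S (L x)⟫ := hTS x
    _ ≤ d * ‖L x‖ ^ 2 := OrthonormalBasis.inner_map_self_le_mul_norm_sq hS (by simp) hxW
    _ ≤ d * ‖x‖ ^ 2 := by gcongr; exact hL x

end RayleighQuotient

namespace Matrix

variable {m : Type*} [Fintype m] [DecidableEq m]

theorem IsHermitian.toEuclideanLin_eigenvectorBasis {A : Matrix m m ℝ} (hA : A.IsHermitian)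
    (i : m) :
    toEuclideanLin A (hA.eigenvectorBasis i) = hA.eigenvalues i • hA.eigenvectorBasis i := by
  apply (WithLp.equiv 2 (m → ℝ)).injective
  simp [hA.mulVec_eigenvectorBasis]

theorem inner_toEuclideanLin_conjTranspose_mul_mul (S V : Matrix m m ℝ)
    (x : EuclideanSpace ℝ m) :
    ⟪x, toEuclideanLin (Vᴴ * S * V) x⟫ =
      ⟪toEuclideanLin V x, toEuclideanLin S (toEuclideanLin V x)⟫ := by
  simp only [toLpLin_apply, EuclideanSpace.inner_eq_star_dotProduct, star_trivial]
  rw [← mulVec_mulVec, ← mulVec_mulVec, conjTranspose_eq_transpose_of_trivial, mulVec_transpose,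
    dotProduct_mulVec]

theorem norm_toEuclideanLin_le {V : Matrix m m ℝ} (hV : (1 - Vᴴ * V).PosSemidef)
    (x : EuclideanSpace ℝ m) : ‖toEuclideanLin V x‖ ≤ ‖x‖ := by
  have h := (isPositive_toEuclideanLin_iff.2 hV).re_inner_nonneg_right x
  rw [← Matrix.mul_one Vᴴ, map_sub, LinearMap.sub_apply, inner_sub_right,
    inner_toEuclideanLin_conjTranspose_mul_mul] at h
  simp only [toLpLin_one, LinearMap.id_apply, real_inner_self_eq_norm_sq, RCLike.re_to_real] at h
  exact (sq_le_sq₀ (norm_nonneg _) (norm_nonneg _)).1 (by linarith)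

open scoped ComplexOrder MatrixOrder in
theorem PosSemidef.one_sub_mul_self {𝕜 : Type*} [RCLike 𝕜] {V : Matrix m m 𝕜}
    (h₀ : V.PosSemidef) (h₁ : (1 - V).PosSemidef) : (1 - V * V).PosSemidef := by
  have hV1 : V ≤ 1 := sub_nonneg.1 h₁.nonneg
  rw [← nonneg_iff_posSemidef, sub_nonneg]
  exact (mul_self_le_self_of_nonneg_of_le_one h₀.nonneg hV1).trans hV1

theorem PosSemidef.eigenvalues_conjTranspose_mul_mul_le {n : ℕ}
    {S V : Matrix (Fin n) (Fin n) ℝ} (hS : S.PosSemidef) (hV : (1 - Vᴴ * V).PosSemidef)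
    (hVSV : (Vᴴ * S * V).IsHermitian) {σ τ : Equiv.Perm (Fin n)}
    (hσ : Monotone (hVSV.eigenvalues ∘ σ)) (hτ : Monotone (hS.isHermitian.eigenvalues ∘ τ))
    (k : Fin n) : hVSV.eigenvalues (σ k) ≤ hS.isHermitian.eigenvalues (τ k) := by
  refine le_of_card_lt_card_add_card _ _ hVSV.toEuclideanLin_eigenvectorBasis
    hS.isHermitian.toEuclideanLin_eigenvectorBasis
    (fun x => (inner_toEuclideanLin_conjTranspose_mul_mul S V x).le) (norm_toEuclideanLin_le hV)
    (hS.eigenvalues_nonneg _) ?_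
  have hU := hσ.card_Ici_le_card_filter_le k
  have hW := hτ.card_Iic_le_card_filter_le k
  rw [Fin.card_Ici] at hU
  rw [Fin.card_Iic] at hW
  rw [Fintype.card_fin]
  omega

end Matrix

theorem stmt_8_general (n : ℕ) (M V : Matrix (Fin n) (Fin n) ℝ)
    (hMneg : (-M).PosSemidef)
    (hVpsd : V.PosSemidef) (hVle : (1 - V).PosSemidef)
    (f : Matrix (Fin n) (Fin n) ℝ → ℝ)
    (hmono : ∀ (A B : Matrix (Fin n) (Fin n) ℝ) (hA : A.IsHermitian) (hB : B.IsHermitian)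
      (σ τ : Equiv.Perm (Fin n)),
      Monotone (fun i => hA.eigenvalues (σ i)) →
      Monotone (fun i => hB.eigenvalues (τ i)) →
      (∀ i : Fin n, hA.eigenvalues (σ i) ≤ hB.eigenvalues (τ i)) → f A ≤ f B) :
    f (-(V * M * V)) ≤ f (-M) := by
  have hV : (1 - Vᴴ * V).PosSemidef := by
    rw [hVpsd.isHermitian.eq]
    exact hVpsd.one_sub_mul_self hVle
  have hconj : -(V * M * V) = Vᴴ * (-M) * V := by
    rw [hVpsd.isHermitian.eq, Matrix.mul_neg, Matrix.neg_mul]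
  have hA := isHermitian_conjTranspose_mul_mul V hMneg.isHermitian
  have hσ := Tuple.monotone_sort hA.eigenvalues
  have hτ := Tuple.monotone_sort hMneg.isHermitian.eigenvalues
  rw [hconj]
  exact hmono _ _ hA hMneg.isHermitian _ _ hσ hτ
    (hMneg.eigenvalues_conjTranspose_mul_mul_le hV hA hσ hτ)

/-- For `M ≤ 0`, `0 ≤ V ≤ I` and any monotone isotropic function `f` on symmetric
matrices, `f(-V·M·V) ≤ f(-M)`. -/
theorem stmt_8 (n : ℕ) (M V : Matrix (Fin n) (Fin n) ℝ)
    (hM : M.IsHermitian) (hMneg : (-M).PosSemidef)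
    (hV : V.IsHermitian) (hVpsd : V.PosSemidef) (hVle : (1 - V).PosSemidef)
    (f : Matrix (Fin n) (Fin n) ℝ → ℝ)
    (hiso : ∀ (A O : Matrix (Fin n) (Fin n) ℝ),
      O ∈ Matrix.orthogonalGroup (Fin n) ℝ → f (O⁻¹ * A * O) = f A)
    (hmono : ∀ (A B : Matrix (Fin n) (Fin n) ℝ) (hA : A.IsHermitian) (hB : B.IsHermitian)
      (σ τ : Equiv.Perm (Fin n)),
      Monotone (fun i => hA.eigenvalues (σ i)) →
      Monotone (fun i => hB.eigenvalues (τ i)) →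
      (∀ i : Fin n, hA.eigenvalues (σ i) ≤ hB.eigenvalues (τ i)) → f A ≤ f B) :
    f (-(V * M * V)) ≤ f (-M) :=
  stmt_8_general n M V hMneg hVpsd hVle f hmono
end

section
/- Let λ₁ ≤ λ₂ ≤ … ≤ λ_n be fixed reals. The function F on symmetric n×n real matrices defined by F(A) = Σᵢ λᵢ·κᵢ(A), where κ₁(A) ≤ … ≤ κ_n(A) are the ordered eigenvalues of A, is convex: F(½(A+B)) ≤ ½(F(A) + F(B)) for all symmetric A, B. -/
open Matrix Finset


local notation "⟪" x ", " y "⟫" => @inner ℝ _ _ x y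

lemma eigvec (n : ℕ) (M : Matrix (Fin n) (Fin n) ℝ) (hM : M.IsHermitian) (j : Fin n) :
    Matrix.toEuclideanLin M (hM.eigenvectorBasis j) = hM.eigenvalues j • hM.eigenvectorBasis j := by
  have h := hM.mulVec_eigenvectorBasis j
  rw [toEuclideanLin_apply]
  ext k
  simpa using congrFun h k

lemma quad_expand (n : ℕ) (M : Matrix (Fin n) (Fin n) ℝ) (hM : M.IsHermitian)
    (y : EuclideanSpace ℝ (Fin n)) :
    ⟪y, Matrix.toEuclideanLin M y⟫ =
      ∑ j : Fin n, hM.eigenvalues j * ⟪hM.eigenvectorBasis j, y⟫ ^ 2 := by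
  set u := hM.eigenvectorBasis
  rw [← OrthonormalBasis.sum_inner_mul_inner u y (Matrix.toEuclideanLin M y)]
  refine Finset.sum_congr rfl fun j _ => ?_
  have hsym := (Matrix.isHermitian_iff_isSymmetric.1 hM)
  have : ⟪u j, Matrix.toEuclideanLin M y⟫ = ⟪Matrix.toEuclideanLin M (u j), y⟫ := (hsym (u j) y).symm
  rw [this, eigvec n M hM j, real_inner_smul_left, real_inner_comm y (u j)]
  ring

lemma parseval (n : ℕ) (b : OrthonormalBasis (Fin n) ℝ (EuclideanSpace ℝ (Fin n)))
    (y : EuclideanSpace ℝ (Fin n)) :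
    ∑ j : Fin n, ⟪b j, y⟫ ^ 2 = ⟪y, y⟫ := by
  rw [← OrthonormalBasis.sum_inner_mul_inner b y y]
  exact Finset.sum_congr rfl fun j _ => by rw [real_inner_comm y (b j)]; ring

lemma basis_inner_self (n : ℕ) (b : OrthonormalBasis (Fin n) ℝ (EuclideanSpace ℝ (Fin n)))
    (i : Fin n) : ⟪b i, b i⟫ = 1 := by
  rw [real_inner_self_eq_norm_sq, b.orthonormal.1 i]
  norm_num

-- one-sided bound: weighted quadratic forms vs weighted eigenvalues

lemma abel_ineq (n : ℕ) (w d : ℕ → ℝ) (hw : ∀ i, i + 1 < n → w i ≤ w (i + 1))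
    (hS : ∀ k, k < n → 0 ≤ ∑ i ∈ range k, d i) (hSn : ∑ i ∈ range n, d i = 0) :
    ∑ i ∈ range n, w i * d i ≤ 0 := by
  have := Finset.sum_range_by_parts w d n
  simp only [smul_eq_mul] at this
  rw [this, hSn, mul_zero, zero_sub, neg_nonpos]
  apply Finset.sum_nonneg
  intro i hi
  rw [Finset.mem_range] at hi
  have h1 : i + 1 < n := by omega
  exact mul_nonneg (by linarith [hw i h1]) (hS (i + 1) h1)

lemma sum_fin_ite (n k : ℕ) (hk : k ≤ n) (f : ℕ → ℝ) :
    ∑ j : Fin n, (if (j : ℕ) < k then f j else 0) = ∑ i ∈ range k, f i := by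
  rw [Fin.sum_univ_eq_sum_range (fun m => if m < k then f m else 0) n]
  rw [← Finset.sum_subset (Finset.range_subset_range.2 hk)
    (fun x _ hx => by rw [Finset.mem_range] at hx; simp [if_neg hx])]
  exact Finset.sum_congr rfl fun i hi => if_pos (Finset.mem_range.1 hi)

lemma key (n : ℕ) (w μ : Fin n → ℝ) (hw : Monotone w) (hμ : Monotone μ)
    (P : Fin n → Fin n → ℝ) (hP0 : ∀ i j, 0 ≤ P i j)
    (hrow : ∀ i, ∑ j, P i j = 1) (hcol : ∀ j, ∑ i, P i j = 1) :
    ∑ i, w i * (∑ j, P i j * μ j) ≤ ∑ i, w i * μ i := by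
  rcases Nat.eq_zero_or_pos n with rfl | hn
  · simp
  set r : ℕ → Fin n := fun k => ⟨min k (n - 1), by omega⟩ with hrdef
  have hrv : ∀ j : Fin n, r j.val = j := by
    intro j; ext; simp only [hrdef]; omega
  set q : ℕ → ℝ := fun i => ∑ j, P (r i) j * μ j with hq
  set d : ℕ → ℝ := fun k => q k - μ (r k) with hd
  have hcfull : ∀ j, ∑ i ∈ range n, P (r i) j = 1 := by
    intro j
    rw [← Fin.sum_univ_eq_sum_range (fun m => P (r m) j) n]
    rw [Finset.sum_congr rfl (fun i (_ : i ∈ Finset.univ) => by rw [hrv i])]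
    exact hcol j
  -- generic prefix-sum identity
  have hdk : ∀ k, k ≤ n → ∑ i ∈ range k, d i =
      ∑ j : Fin n, ((∑ i ∈ range k, P (r i) j) - (if (j : ℕ) < k then 1 else 0)) * μ j := by
    intro k hk
    have hA : ∑ i ∈ range k, q i = ∑ j : Fin n, (∑ i ∈ range k, P (r i) j) * μ j := by
      rw [hq, Finset.sum_comm' (s := range k) (t := fun _ => Finset.univ)
        (t' := Finset.univ) (s' := fun _ => range k) (by simp [and_comm])]
      simp [Finset.sum_mul]
    have hB : ∑ j : Fin n, (if (j : ℕ) < k then 1 else 0 : ℝ) * μ j = ∑ i ∈ range k, μ (r i) := by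
      rw [← sum_fin_ite n k hk (fun m => μ (r m))]
      refine Finset.sum_congr rfl fun j _ => ?_
      by_cases h : (j : ℕ) < k <;> simp [h, hrv]
    simp only [hd, Finset.sum_sub_distrib, sub_mul]
    rw [hA, hB]
  have hsum_c : ∀ k, k ≤ n → ∑ j : Fin n, (∑ i ∈ range k, P (r i) j) = k := by
    intro k hk
    rw [Finset.sum_comm]
    have : ∀ i ∈ range k, ∑ j : Fin n, P (r i) j = 1 := fun i _ => hrow (r i)
    rw [Finset.sum_congr rfl this]
    simp
  have hsum_e : ∀ k, k ≤ n → ∑ j : Fin n, (if (j : ℕ) < k then 1 else 0 : ℝ) = k := by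
    intro k hk
    rw [sum_fin_ite n k hk (fun _ => (1 : ℝ))]
    simp
  -- full sum is zero
  have hSn : ∑ i ∈ range n, d i = 0 := by
    rw [hdk n le_rfl]
    refine Finset.sum_eq_zero fun j _ => ?_
    rw [hcfull j, if_pos j.isLt, sub_self, zero_mul]
  -- prefix sums nonneg
  have hS : ∀ k, k < n → 0 ≤ ∑ i ∈ range k, d i := by
    intro k hkn
    have hk : k ≤ n := hkn.le
    rw [hdk k hk]
    set t := μ (r k) with ht
    have step : ∀ j : Fin n,
        ((∑ i ∈ range k, P (r i) j) - (if (j : ℕ) < k then 1 else 0)) * t ≤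
        ((∑ i ∈ range k, P (r i) j) - (if (j : ℕ) < k then 1 else 0)) * μ j := by
      intro j
      by_cases h : (j : ℕ) < k
      · have hc1 : ∑ i ∈ range k, P (r i) j ≤ 1 := by
          rw [← hcfull j]
          exact Finset.sum_le_sum_of_subset_of_nonneg (Finset.range_subset_range.2 hk)
            (fun i _ _ => hP0 _ _)
        have hμt : μ j ≤ t := by
          apply hμ
          show (j : ℕ) ≤ min k (n - 1)
          omega
        rw [if_pos h]
        nlinarith
      · have hc0 : 0 ≤ ∑ i ∈ range k, P (r i) j := Finset.sum_nonneg fun i _ => hP0 _ _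
        have hμt : t ≤ μ j := by
          apply hμ
          show min k (n - 1) ≤ (j : ℕ)
          omega
        rw [if_neg h]
        nlinarith
    calc (0:ℝ) = ∑ j : Fin n,
          ((∑ i ∈ range k, P (r i) j) - (if (j : ℕ) < k then 1 else 0)) * t := by
          rw [← Finset.sum_mul, Finset.sum_sub_distrib, hsum_c k hk, hsum_e k hk,
            sub_self, zero_mul]
      _ ≤ _ := Finset.sum_le_sum fun j _ => step j
  -- apply abel
  have habel := abel_ineq n (fun k => w (r k)) d
    (fun i hi => hw (by show min i (n-1) ≤ min (i+1) (n-1); omega)) hS hSn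
  have hconv : ∑ i ∈ range n, (fun k => w (r k)) i * d i
      = ∑ i, w i * (∑ j, P i j * μ j) - ∑ i, w i * μ i := by
    rw [← Fin.sum_univ_eq_sum_range (fun m => w (r m) * d m) n]
    rw [← Finset.sum_sub_distrib]
    refine Finset.sum_congr rfl fun i _ => ?_
    simp only [hd, hq, hrv]
    ring
  rw [hconv] at habel
  linarith

lemma one_side (n : ℕ) (w : Fin n → ℝ) (hw : Monotone w)
    (M : Matrix (Fin n) (Fin n) ℝ) (hM : M.IsHermitian) (σ : Equiv.Perm (Fin n))
    (hm : Monotone (fun i => hM.eigenvalues (σ i)))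
    (x : OrthonormalBasis (Fin n) ℝ (EuclideanSpace ℝ (Fin n))) :
    ∑ i : Fin n, w i * ⟪x i, Matrix.toEuclideanLin M (x i)⟫ ≤
      ∑ i : Fin n, w i * hM.eigenvalues (σ i) := by
  set u := hM.eigenvectorBasis
  set P : Fin n → Fin n → ℝ := fun i j => ⟪u (σ j), x i⟫ ^ 2 with hP
  have hq : ∀ i, ⟪x i, Matrix.toEuclideanLin M (x i)⟫ =
      ∑ j, P i j * hM.eigenvalues (σ j) := by
    intro i
    rw [quad_expand n M hM (x i)]
    rw [← Equiv.sum_comp σ (fun j => hM.eigenvalues j * ⟪u j, x i⟫ ^ 2)]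
    exact Finset.sum_congr rfl fun j _ => by rw [hP]; ring
  have hrow : ∀ i, ∑ j, P i j = 1 := by
    intro i
    rw [hP]
    rw [Equiv.sum_comp σ (fun j => ⟪u j, x i⟫ ^ 2)]
    rw [parseval n u (x i), basis_inner_self n x i]
  have hcol : ∀ j, ∑ i, P i j = 1 := by
    intro j
    have : ∀ i, P i j = ⟪x i, u (σ j)⟫ ^ 2 := fun i => by
      rw [hP, real_inner_comm]
    simp_rw [this]
    rw [parseval n x (u (σ j)), basis_inner_self n u (σ j)]
  calc ∑ i : Fin n, w i * ⟪x i, Matrix.toEuclideanLin M (x i)⟫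
      = ∑ i, w i * (∑ j, P i j * hM.eigenvalues (σ j)) :=
        Finset.sum_congr rfl fun i _ => by rw [hq i]
    _ ≤ ∑ i, w i * hM.eigenvalues (σ i) :=
        key n w (fun i => hM.eigenvalues (σ i)) hw hm P (fun i j => sq_nonneg _)
          hrow hcol

/-- The weighted trace `F(A) = Σᵢ λᵢ κᵢ(A)` (nondecreasing weights against ordered
eigenvalues) is midpoint convex on symmetric matrices. -/
theorem stmt_9 (n : ℕ) (w : Fin n → ℝ) (hw : Monotone w)
    (A B : Matrix (Fin n) (Fin n) ℝ)
    (hA : A.IsHermitian) (hB : B.IsHermitian)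
    (hC : (((1 : ℝ) / 2) • (A + B)).IsHermitian)
    (σA σB σC : Equiv.Perm (Fin n))
    (hmA : Monotone (fun i => hA.eigenvalues (σA i)))
    (hmB : Monotone (fun i => hB.eigenvalues (σB i)))
    (hmC : Monotone (fun i => hC.eigenvalues (σC i))) :
    ∑ i : Fin n, w i * hC.eigenvalues (σC i) ≤
      (1 / 2) * (∑ i : Fin n, w i * hA.eigenvalues (σA i) +
        ∑ i : Fin n, w i * hB.eigenvalues (σB i)) := by
  set x := hC.eigenvectorBasis.reindex σC.symm with hxdef
  have hx : ∀ i, x i = hC.eigenvectorBasis (σC i) := fun i => by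
    simp [hxdef, OrthonormalBasis.reindex_apply]
  have hqC : ∀ i, ⟪x i, Matrix.toEuclideanLin (((1:ℝ)/2) • (A + B)) (x i)⟫ =
      hC.eigenvalues (σC i) := by
    intro i
    rw [hx i, eigvec n _ hC (σC i), real_inner_smul_right, basis_inner_self, mul_one]
  have hsplit : ∀ i, ⟪x i, Matrix.toEuclideanLin (((1:ℝ)/2) • (A + B)) (x i)⟫ =
      (1/2) * ⟪x i, Matrix.toEuclideanLin A (x i)⟫ +
      (1/2) * ⟪x i, Matrix.toEuclideanLin B (x i)⟫ := by
    intro i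
    rw [_root_.map_smul, _root_.map_add]
    simp only [LinearMap.smul_apply, LinearMap.add_apply]
    rw [real_inner_smul_right, inner_add_right]
    ring
  have e1 : ∑ i : Fin n, w i * hC.eigenvalues (σC i) =
      (1/2) * ∑ i : Fin n, w i * ⟪x i, Matrix.toEuclideanLin A (x i)⟫ +
      (1/2) * ∑ i : Fin n, w i * ⟪x i, Matrix.toEuclideanLin B (x i)⟫ := by
    rw [Finset.mul_sum, Finset.mul_sum, ← Finset.sum_add_distrib]
    refine Finset.sum_congr rfl fun i _ => ?_
    rw [← hqC i, hsplit i]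
    ring
  have bA := one_side n w hw A hA σA hmA x
  have bB := one_side n w hw B hB σB hmB x
  rw [e1]
  linarith
end

section
/- Let p_z, p_x, p_y ≥ 0, u_x, u_y, u_z, B ∈ ℝ, and let H_x, H_y, H_z be symmetric n×n matrices. Let f : [0,∞) × Sym(n) → ℝ be nondecreasing in the first variable, and on symmetric matrices monotone (with respect to pointwise ordering of eigenvalues, equivalently the Loewner order) and midpoint convex. Let b_z, b_x, b_y : ℝ × [0,∞) → ℝ be functions (representing b(x,·,·) at the points z, x, y respectively) such that b_z, b_x, b_y are nonincreasing in the second argument, b_z(·,p) is strictly decreasing in the first argument, and the joint concavity b_z(½(u_x+u_y), p) ≥ ½ b_x(u_x,p) + ½ b_y(u_y,p) holds for all p. Suppose: (a) f(p_z, -H_z) = b_z(u_z, p_z); (b) f(p_x, -H_x) = b_x(u_x, p_x); (c) f(p_y, -H_y) = b_y(u_y, p_y); (d) -H_z ≤ -½(H_x + H_y) in the Loewner order; (e) p_z ≤ p_x and p_z ≤ p_y. Then u_z ≥ ½(u_x + u_y). -/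
open Matrix

/-- The algebraic chain of inequalities at an interior minimum of the two-point
function in the proof of the elliptic concavity principle. -/
theorem stmt_11 (n : ℕ) (p_z p_x p_y : ℝ) (hpz : 0 ≤ p_z) (hpx : 0 ≤ p_x) (hpy : 0 ≤ p_y)
    (u_x u_y u_z : ℝ)
    (H_x H_y H_z : Matrix (Fin n) (Fin n) ℝ)
    (hHx : H_x.IsHermitian) (hHy : H_y.IsHermitian) (hHz : H_z.IsHermitian)
    (f : ℝ → Matrix (Fin n) (Fin n) ℝ → ℝ)
    -- f nondecreasing in the first variable
    (hf1 : ∀ (p q : ℝ) (M : Matrix (Fin n) (Fin n) ℝ), 0 ≤ p → p ≤ q → f p M ≤ f q M)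
    -- f monotone in the Loewner order
    (hfmono : ∀ (p : ℝ) (A B : Matrix (Fin n) (Fin n) ℝ), (B - A).PosSemidef →
      f p A ≤ f p B)
    -- f midpoint convex in the matrix variable
    (hfconv : ∀ (p : ℝ) (A B : Matrix (Fin n) (Fin n) ℝ),
      f p (((1 : ℝ) / 2) • (A + B)) ≤ (f p A + f p B) / 2)
    (b_z b_x b_y : ℝ → ℝ → ℝ)
    -- nonincreasing in the second argument
    (hbz2 : ∀ (u p q : ℝ), p ≤ q → b_z u q ≤ b_z u p)
    (hbx2 : ∀ (u p q : ℝ), p ≤ q → b_x u q ≤ b_x u p)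
    (hby2 : ∀ (u p q : ℝ), p ≤ q → b_y u q ≤ b_y u p)
    -- b_z strictly decreasing in the first argument
    (hbz1 : ∀ (u v p : ℝ), u < v → b_z v p < b_z u p)
    -- joint concavity
    (hconc : ∀ p : ℝ, (1 / 2) * b_x u_x p + (1 / 2) * b_y u_y p ≤
      b_z ((u_x + u_y) / 2) p)
    -- (a), (b), (c): the PDE at the three points
    (ha : f p_z (-H_z) = b_z u_z p_z)
    (hb : f p_x (-H_x) = b_x u_x p_x)
    (hc : f p_y (-H_y) = b_y u_y p_y)
    -- (d): Hessian comparison in the Loewner order, `-H_z ≤ -½(H_x + H_y)`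
    (hd : ((-(((1 : ℝ) / 2) • (H_x + H_y))) - (-H_z)).PosSemidef)
    -- (e): gradient comparison
    (he1 : p_z ≤ p_x) (he2 : p_z ≤ p_y) :
    (u_x + u_y) / 2 ≤ u_z := by
  by_contra h
  push_neg at h
  have key : b_z u_z p_z ≤ b_z ((u_x + u_y) / 2) p_z := by
    calc b_z u_z p_z = f p_z (-H_z) := ha.symm
      _ ≤ f p_z (-(((1 : ℝ) / 2) • (H_x + H_y))) := hfmono _ _ _ hd
      _ = f p_z (((1 : ℝ) / 2) • ((-H_x) + (-H_y))) := by rw [show -(((1 : ℝ) / 2) • (H_x + H_y)) = ((1 : ℝ) / 2) • ((-H_x) + (-H_y)) by rw [← smul_neg, neg_add]]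
      _ ≤ (f p_z (-H_x) + f p_z (-H_y)) / 2 := hfconv _ _ _
      _ ≤ (f p_x (-H_x) + f p_y (-H_y)) / 2 := by
          have h1 := hf1 p_z p_x (-H_x) hpz he1
          have h2 := hf1 p_z p_y (-H_y) hpz he2
          linarith
      _ = (b_x u_x p_x + b_y u_y p_y) / 2 := by rw [hb, hc]
      _ ≤ (b_x u_x p_z + b_y u_y p_z) / 2 := by
          have h1 := hbx2 u_x p_z p_x he1
          have h2 := hby2 u_y p_z p_y he2
          linarith
      _ ≤ b_z ((u_x + u_y) / 2) p_z := by
          have := hconc p_z; linarith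
  have := hbz1 u_z ((u_x + u_y) / 2) p_z h
  linarith
end
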